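/- Let S be a finite set, d a positive integer, f : S → ℝ a function with f(x) ≥ 0 for all x ∈ S, and let ψ : S → ℝ^d be a random map such that the d·|S| coordinates {ψ(s)_i : s ∈ S, 1 ≤ i ≤ d} are independent and each is uniformly distributed on {−1/√d, +1/√d}. For arbitrary subsets A, B ⊆ S, define the random vectors a = Σ_{x ∈ A} ψ(x)·√(f(x)) and b = Σ_{y ∈ B} ψ(y)·√(f(y)). Then E[a · b] = Σ_{x ∈ A ∩ B} f(x). -/

import Mathlib

/-!
Each coordinate `ψ(s)_i` is a random sign scaled by `c = 1/√d`: it has mean `0` and square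
`c² = 1/d` almost surely, so by independence `E[ψ(x)_i ψ(y)_i] = δ_{xy}/d`. Expanding the dot
product bilinearly, only the diagonal terms `x = y ∈ A ∩ B` survive, each contributing
`√f(x)² / d = f(x) / d` in each of the `d` coordinates.
-/

open MeasureTheory ProbabilityTheory

section SymmetricSign

variable {Ω : Type*} [MeasurableSpace Ω] {μ : Measure Ω} [IsProbabilityMeasure μ]
  {X : Ω → ℝ} {c : ℝ}

lemma ae_eq_or_eq_neg_of_measure_eq_half (hX : Measurable X) (hc : c ≠ 0)
    (hpos : μ {ω | X ω = c} = 1 / 2) (hneg : μ {ω | X ω = -c} = 1 / 2) :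
    ∀ᵐ ω ∂μ, X ω = c ∨ X ω = -c := by
  have hdisj : Disjoint {ω | X ω = c} {ω | X ω = -c} :=
    Set.disjoint_left.mpr fun ω hc' hc'' => hc (by linarith [hc'.symm.trans hc''])
  have hunion : μ ({ω | X ω = c} ∪ {ω | X ω = -c}) = 1 := by
    rw [measure_union hdisj (hX (measurableSet_singleton _)), hpos, hneg, ENNReal.add_halves]
  refine (ae_iff_measure_eq ?_).mpr (by simpa [Set.ofPred_or] using hunion)
  exact (measurableSet_eq_fun hX measurable_const).union
    (measurableSet_eq_fun hX measurable_const) |>.nullMeasurableSet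

lemma integral_eq_zero_of_measure_eq_half (hX : Measurable X) (hc : c ≠ 0)
    (hpos : μ {ω | X ω = c} = 1 / 2) (hneg : μ {ω | X ω = -c} = 1 / 2) :
    ∫ ω, X ω ∂μ = 0 := by
  have hmeas (a : ℝ) : MeasurableSet {ω | X ω = a} := hX (measurableSet_singleton a)
  have hne : c ≠ -c := fun h => hc (by linarith)
  have hsplit : X =ᵐ[μ] fun ω =>
      {ω | X ω = c}.indicator (fun _ => c) ω + {ω | X ω = -c}.indicator (fun _ => -c) ω := by
    filter_upwards [ae_eq_or_eq_neg_of_measure_eq_half hX hc hpos hneg] with ω h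
    rcases h with h | h <;> simp [Set.indicator, h, hne, hne.symm]
  rw [integral_congr_ae hsplit, integral_add ((integrable_const c).indicator (hmeas c))
    ((integrable_const (-c)).indicator (hmeas (-c))), integral_indicator_const _ (hmeas c),
    integral_indicator_const _ (hmeas (-c)), measureReal_def, measureReal_def, hpos, hneg]
  simp

lemma abs_ae_eq_of_measure_eq_half (hX : Measurable X) (hc : c ≠ 0)
    (hpos : μ {ω | X ω = c} = 1 / 2) (hneg : μ {ω | X ω = -c} = 1 / 2) :
    ∀ᵐ ω ∂μ, |X ω| = |c| := by
  filter_upwards [ae_eq_or_eq_neg_of_measure_eq_half hX hc hpos hneg] with ω h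
  rcases h with h | h <;> simp [h]

lemma integral_mul_self_of_measure_eq_half (hX : Measurable X) (hc : c ≠ 0)
    (hpos : μ {ω | X ω = c} = 1 / 2) (hneg : μ {ω | X ω = -c} = 1 / 2) :
    ∫ ω, X ω * X ω ∂μ = c * c := by
  have hsq : (fun ω => X ω * X ω) =ᵐ[μ] fun _ => c * c := by
    filter_upwards [abs_ae_eq_of_measure_eq_half hX hc hpos hneg] with ω h
    rw [← abs_mul_abs_self, h, abs_mul_abs_self]
  simp [integral_congr_ae hsq]

end SymmetricSign

lemma integrable_mul_of_abs_ae_eq {Ω : Type*} [MeasurableSpace Ω] {μ : Measure Ω}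
    [IsFiniteMeasure μ] {X Y : Ω → ℝ} {c c' : ℝ}
    (hX : AEStronglyMeasurable X μ) (hY : AEStronglyMeasurable Y μ)
    (hXc : ∀ᵐ ω ∂μ, |X ω| = |c|) (hYc : ∀ᵐ ω ∂μ, |Y ω| = |c'|) :
    Integrable (fun ω => X ω * Y ω) μ := by
  refine .of_bound (hX.mul hY) (|c| * |c'|) ?_
  filter_upwards [hXc, hYc] with ω hx hy
  rw [Real.norm_eq_abs, abs_mul, hx, hy]

section Uncorrelated

variable {Ω : Type*} [MeasurableSpace Ω] {μ : Measure Ω} {ι : Type*}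

lemma integral_mul_eq_ite_of_iIndepFun [DecidableEq ι] {X : ι → Ω → ℝ} {σ2 : ℝ}
    (hindep : iIndepFun X μ) (hX : ∀ i, AEStronglyMeasurable (X i) μ)
    (hmean : ∀ i, ∫ ω, X i ω ∂μ = 0)
    (hsq : ∀ i, ∫ ω, X i ω * X i ω ∂μ = σ2) (i j : ι) :
    ∫ ω, X i ω * X j ω ∂μ = if i = j then σ2 else 0 := by
  split_ifs with hij
  · exact hij ▸ hsq i
  · simpa [hmean] using (hindep.indepFun hij).integral_mul_eq_mul_integral (hX i) (hX j)

lemma integrable_sum_mul_sum {X : ι → Ω → ℝ}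
    (hint : ∀ i j, Integrable (fun ω => X i ω * X j ω) μ) (A B : Finset ι) (a b : ι → ℝ) :
    Integrable (fun ω => (∑ i ∈ A, X i ω * a i) * (∑ j ∈ B, X j ω * b j)) μ := by
  simp_rw [Finset.sum_mul_sum]
  exact integrable_finsetSum _ fun i _ => integrable_finsetSum _ fun j _ =>
    ((hint i j).const_mul (a i * b j)).congr (.of_forall fun ω => by ring)

lemma integral_sum_mul_sum_of_orthogonal [DecidableEq ι] {X : ι → Ω → ℝ} {σ2 : ℝ}
    (hint : ∀ i j, Integrable (fun ω => X i ω * X j ω) μ)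
    (hcov : ∀ i j, ∫ ω, X i ω * X j ω ∂μ = if i = j then σ2 else 0)
    (A B : Finset ι) (a b : ι → ℝ) :
    ∫ ω, (∑ i ∈ A, X i ω * a i) * (∑ j ∈ B, X j ω * b j) ∂μ
      = σ2 * ∑ i ∈ A ∩ B, a i * b i := by
  have hexpand : (fun ω => (∑ i ∈ A, X i ω * a i) * (∑ j ∈ B, X j ω * b j))
      = fun ω => ∑ i ∈ A, ∑ j ∈ B, a i * b j * (X i ω * X j ω) := by
    funext ω
    rw [Finset.sum_mul_sum]
    exact Finset.sum_congr rfl fun i _ => Finset.sum_congr rfl fun j _ => by ring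
  rw [hexpand, integral_finsetSum _ fun i _ => integrable_finsetSum _ fun j _ =>
    (hint i j).const_mul _]
  have hrow (i : ι) : ∫ ω, ∑ j ∈ B, a i * b j * (X i ω * X j ω) ∂μ
      = if i ∈ B then σ2 * (a i * b i) else 0 := by
    rw [integral_finsetSum _ fun j _ => (hint i j).const_mul _]
    simp_rw [integral_const_mul, hcov, mul_ite, mul_zero, Finset.sum_ite_eq]
    split_ifs <;> ring
  simp_rw [hrow, ← Finset.sum_filter, Finset.filter_mem_eq_inter, Finset.mul_sum]

end Uncorrelated

/-- For a nonnegative weight function `f`, the expected dot product of the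
`√f`-weighted DotHash sketches equals `∑_{x ∈ A ∩ B} f(x)`. -/
theorem dothash_expected_dot_eq_weighted_inter
    {Ω : Type*} [MeasurableSpace Ω] (μ : Measure Ω) [IsProbabilityMeasure μ]
    {S : Type*} [Fintype S] [DecidableEq S]
    (d : ℕ) (hd : 0 < d)
    (f : S → ℝ) (hf : ∀ x : S, 0 ≤ f x)
    (ψ : Ω → S → Fin d → ℝ)
    (hmeas : ∀ (s : S) (i : Fin d), Measurable fun ω => ψ ω s i)
    (hindep : iIndepFun
      (fun (p : S × Fin d) ω => ψ ω p.1 p.2) μ)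
    (hunif : ∀ (s : S) (i : Fin d),
      μ {ω | ψ ω s i = 1 / Real.sqrt d} = 1/2 ∧
      μ {ω | ψ ω s i = -(1 / Real.sqrt d)} = 1/2)
    (A B : Finset S) :
    ∫ ω, ∑ i, (∑ x ∈ A, ψ ω x i * Real.sqrt (f x))
        * (∑ y ∈ B, ψ ω y i * Real.sqrt (f y)) ∂μ
      = ∑ x ∈ A ∩ B, f x := by
  set c : ℝ := 1 / Real.sqrt d
  have hdR : (0 : ℝ) < d := by exact_mod_cast hd
  have hc : c ≠ 0 := by positivity
  have hcc : c * c = 1 / d := by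
    rw [div_mul_div_comm, one_mul, Real.mul_self_sqrt hdR.le]
  have hcov (i : Fin d) (x y : S) :
      ∫ ω, ψ ω x i * ψ ω y i ∂μ = if x = y then 1 / (d : ℝ) else 0 := by
    simpa [Prod.ext_iff, hcc] using integral_mul_eq_ite_of_iIndepFun hindep
      (fun p => (hmeas p.1 p.2).aestronglyMeasurable)
      (fun p => integral_eq_zero_of_measure_eq_half (hmeas _ _) hc (hunif _ _).1 (hunif _ _).2)
      (fun p => integral_mul_self_of_measure_eq_half (hmeas _ _) hc (hunif _ _).1 (hunif _ _).2)
      (x, i) (y, i)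
  have habs (s : S) (i : Fin d) : ∀ᵐ ω ∂μ, |ψ ω s i| = |c| :=
    abs_ae_eq_of_measure_eq_half (hmeas s i) hc (hunif s i).1 (hunif s i).2
  have hint (i : Fin d) (x y : S) : Integrable (fun ω => ψ ω x i * ψ ω y i) μ :=
    integrable_mul_of_abs_ae_eq (hmeas x i).aestronglyMeasurable
      (hmeas y i).aestronglyMeasurable (habs x i) (habs y i)
  calc _ = ∑ i : Fin d, ∫ ω, (∑ x ∈ A, ψ ω x i * Real.sqrt (f x))
          * (∑ y ∈ B, ψ ω y i * Real.sqrt (f y)) ∂μ :=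
        integral_finsetSum _ fun i _ => integrable_sum_mul_sum (hint i) _ _ _ _
    _ = ∑ _i : Fin d, 1 / (d : ℝ) * ∑ x ∈ A ∩ B, Real.sqrt (f x) * Real.sqrt (f x) :=
        Finset.sum_congr rfl fun i _ =>
          integral_sum_mul_sum_of_orthogonal (hint i) (hcov i) _ _ _ _
    _ = ∑ x ∈ A ∩ B, f x := by
        simp only [Real.mul_self_sqrt (hf _), Finset.sum_const, Finset.card_univ,
          Fintype.card_fin, nsmul_eq_mul]
        field_simp
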